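/- arXiv:1107.1359 — 2 statements merged into one kernel-verified Lean document; each statement's English description precedes it below -/
import Mathlib

section
/- Suppose in a directed rectilinear network every ordered pair among three given terminals t_i ∈ Q₁(t_j), t_j, t_k ∈ Q₃(t_j) is connected by a directed Manhattan path, and suppose there also exists a terminal t_l in the open fourth quadrant Q₄(t_j). If the directed boundaries of the strips R(t_i,t_j) and R(t_j,t_k) are oriented so that both edges of the network incident to t_j lying in Q₄(t_j) are directed away from t_j, then the network contains no directed Manhattan path from t_l to t_j — a contradiction. Hence two strips sharing the terminal t_j with t_i ∈ Q₁(t_j), t_k ∈ Q₃(t_j) must be compatibly oriented whenever Q₄(t_j) (or symmetrically Q₂(t_j)) contains a terminal. -/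
open MeasureTheory

noncomputable section

/-- l1 (Manhattan) distance in the plane. -/
def d1 (p q : ℝ × ℝ) : ℝ := |p.1 - q.1| + |p.2 - q.2|

/-- Smallest axis-parallel rectangle containing `a` and `b`. -/
def Rect (a b : ℝ × ℝ) : Set (ℝ × ℝ) :=
  {m | min a.1 b.1 ≤ m.1 ∧ m.1 ≤ max a.1 b.1 ∧ min a.2 b.2 ≤ m.2 ∧ m.2 ≤ max a.2 b.2}

/-- Length of a polygonal path given by its list of vertices. -/
def pathLen : List (ℝ × ℝ) → ℝ
  | [] => 0
  | [_] => 0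
  | p :: q :: rest => d1 p q + pathLen (q :: rest)

/-- `P` is a path starting at `a` and ending at `b`. -/
def IsPathFrom (P : List (ℝ × ℝ)) (a b : ℝ × ℝ) : Prop :=
  P.head? = some a ∧ P.getLast? = some b

/-- The set of points of the polygonal path `P`. -/
def polyline (P : List (ℝ × ℝ)) : Set (ℝ × ℝ) :=
  ⋃ pr ∈ P.zip P.tail, segment ℝ pr.1 pr.2

/-- There is a directed Manhattan path from `a` to `b` using the directed edges of `N`. -/
def DirManPath (N : Set ((ℝ × ℝ) × (ℝ × ℝ))) (a b : ℝ × ℝ) : Prop :=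
  ∃ P : List (ℝ × ℝ), IsPathFrom P a b ∧ P.Chain' (fun u v => (u, v) ∈ N) ∧
    pathLen P = d1 a b

/-!
A Manhattan path from `tl` to `tj` stays in the rectangle `R(tl, tj)`, so its first edge that
enters `tj` starts at a point `u ≠ tj` of `R(tl, tj)`. Since `tl` lies in `Q₄(tj)`, so does the
whole rectangle, and the edge `(u, tj)` is an edge inside `Q₄(tj)` directed toward `tj`.
-/

lemma d1_triangle (a b c : ℝ × ℝ) : d1 a c ≤ d1 a b + d1 b c := by
  unfold d1
  linarith [abs_sub_le a.1 b.1 c.1, abs_sub_le a.2 b.2 c.2]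

lemma d1_self (a : ℝ × ℝ) : d1 a a = 0 := by
  simp [d1]

lemma pathLen_nonneg : ∀ P : List (ℝ × ℝ), 0 ≤ pathLen P
  | [] | [_] => le_rfl
  | p :: q :: rest => by
    have hpq : 0 ≤ d1 p q := by unfold d1; positivity
    simp only [pathLen]
    linarith [pathLen_nonneg (q :: rest)]

lemma min_le_and_le_max_of_abs_sub_add_abs_sub_le {x y z : ℝ}
    (h : |x - z| + |z - y| ≤ |x - y|) : min x y ≤ z ∧ z ≤ max x y := by
  constructor <;> cases abs_cases (x - z) <;> cases abs_cases (z - y) <;>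
    cases abs_cases (x - y) <;> simp only [min_le_iff, le_max_iff] <;>
    first | (left; linarith) | (right; linarith)

lemma mem_Rect_of_d1_add_d1_le {a b u : ℝ × ℝ} (h : d1 a u + d1 u b ≤ d1 a b) :
    u ∈ Rect a b := by
  unfold d1 at h
  obtain ⟨h₁, h₂⟩ := min_le_and_le_max_of_abs_sub_add_abs_sub_le (x := a.1) (y := b.1) (z := u.1)
    (by linarith [abs_sub_le a.2 u.2 b.2])
  obtain ⟨h₃, h₄⟩ := min_le_and_le_max_of_abs_sub_add_abs_sub_le (x := a.2) (y := b.2) (z := u.2)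
    (by linarith [abs_sub_le a.1 u.1 b.1])
  exact ⟨h₁, h₂, h₃, h₄⟩

lemma exists_edge_into_of_isChain {R : ℝ × ℝ → ℝ × ℝ → Prop} {b : ℝ × ℝ} :
    ∀ (a : ℝ × ℝ) (rest : List (ℝ × ℝ)), a ≠ b → (a :: rest).getLast? = some b →
      (a :: rest).IsChain R → ∃ u, u ≠ b ∧ R u b ∧ d1 a u + d1 u b ≤ pathLen (a :: rest)
  | a, [], hab, hlast, _ => absurd (by simpa using hlast) hab
  | a, q :: rest, hab, hlast, hchain => by
    have hlast' : (q :: rest).getLast? = some b := by simpa [List.getLast?_cons_cons] using hlast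
    have hlen : pathLen (a :: q :: rest) = d1 a q + pathLen (q :: rest) := rfl
    by_cases hqb : q = b
    · subst hqb
      refine ⟨a, hab, hchain.rel, ?_⟩
      rw [hlen, d1_self, zero_add]
      linarith [pathLen_nonneg (q :: rest)]
    · obtain ⟨u, hub, hu, hle⟩ := exists_edge_into_of_isChain q rest hqb hlast' hchain.tail
      refine ⟨u, hub, hu, ?_⟩
      rw [hlen]
      linarith [d1_triangle a q u]

lemma DirManPath.exists_edge_into_mem_Rect {N : Set ((ℝ × ℝ) × (ℝ × ℝ))} {a b : ℝ × ℝ}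
    (h : DirManPath N a b) (hab : a ≠ b) : ∃ u, (u, b) ∈ N ∧ u ≠ b ∧ u ∈ Rect a b := by
  obtain ⟨_ | ⟨p, rest⟩, ⟨hhead, hlast⟩, hchain, hlen⟩ := h
  · simp at hhead
  obtain rfl : p = a := by simpa using hhead
  obtain ⟨u, hub, hu, hle⟩ := exists_edge_into_of_isChain p rest hab hlast hchain
  exact ⟨u, hu, hub, mem_Rect_of_d1_add_d1_le (hlen ▸ hle)⟩

theorem stmt7_general (N : Set ((ℝ × ℝ) × (ℝ × ℝ)))
    (tj tl : ℝ × ℝ)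
    (hQ4 : tj.1 < tl.1 ∧ tl.2 < tj.2)
    (hlj : DirManPath N tl tj)
    (haway : ∀ u : ℝ × ℝ, (u, tj) ∈ N → ¬(tj.1 ≤ u.1 ∧ u.2 ≤ tj.2 ∧ u ≠ tj)) :
    False := by
  have hne : tl ≠ tj := fun h => hQ4.1.ne' (congrArg Prod.fst h)
  obtain ⟨u, hu, hutj, hmin₁, -, -, hmax₂⟩ := hlj.exists_edge_into_mem_Rect hne
  rw [min_eq_right hQ4.1.le] at hmin₁
  rw [max_eq_right hQ4.2.le] at hmax₂
  exact haway u hu ⟨hmin₁, hmax₂, hutj⟩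

/-- If both edges of the network incident to `tj` inside `Q₄(tj)` are directed away from
`tj` (i.e. no edge of `N` inside `Q₄(tj)` points toward `tj`) while a terminal `tl` lies in
the open fourth quadrant of `tj` and is joined to `tj` by a directed Manhattan path, we get
a contradiction. -/
theorem stmt7 (T : Set (ℝ × ℝ)) (N : Set ((ℝ × ℝ) × (ℝ × ℝ)))
    (hedge : ∀ e ∈ N, e.1 ≠ e.2 ∧ (e.1.1 = e.2.1 ∨ e.1.2 = e.2.2))
    (ti tj tk tl : ℝ × ℝ)
    (hiT : ti ∈ T) (hjT : tj ∈ T) (hkT : tk ∈ T) (hlT : tl ∈ T)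
    (hQ1 : tj.1 ≤ ti.1 ∧ tj.2 ≤ ti.2) (hQ3 : tk.1 ≤ tj.1 ∧ tk.2 ≤ tj.2)
    (hQ4 : tj.1 < tl.1 ∧ tl.2 < tj.2)
    (hij : DirManPath N ti tj) (hji : DirManPath N tj ti)
    (hjk : DirManPath N tj tk) (hkj : DirManPath N tk tj)
    (hlj : DirManPath N tl tj)
    (haway : ∀ u : ℝ × ℝ, (u, tj) ∈ N → ¬(tj.1 ≤ u.1 ∧ u.2 ≤ tj.2 ∧ u ≠ tj)) :
    False :=
  stmt7_general N tj tl hQ4 hlj haway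
end
end

section
/- Let F_∅ be the set of ordered pairs (i,j) of terminals with R(t_i,t_j) ∩ T = {t_i,t_j}. Then F_∅ is a generating set: any directed rectilinear network containing a directed Manhattan path for every ordered pair in F_∅ contains a directed Manhattan path for every ordered pair of terminals. -/
open MeasureTheory

noncomputable section

/-! A terminal `c ≠ a, b` inside `R(a, b)` lies between `a` and `b` in both coordinates, so
`d1 a c + d1 c b = d1 a b` and Manhattan paths `a → c → b` concatenate to one from `a` to `b`.
Moreover `R(a, c)` and `R(c, b)` lie in `R(a, b)` and miss `b`, resp. `a`, so they contain fewer
terminals; since `T` is finite, induction on that number reduces every pair to empty ones. -/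

lemma abs_sub_add_abs_sub_of_mem_uIcc {x y z : ℝ} (h : y ∈ Set.uIcc x z) :
    |x - y| + |y - z| = |x - z| := by
  have hdist := dist_add_dist_of_mem_segment (segment_eq_uIcc x z ▸ h)
  rwa [Real.dist_eq, Real.dist_eq, Real.dist_eq] at hdist

lemma Rect_eq_uIcc_prod_uIcc (a b : ℝ × ℝ) :
    Rect a b = Set.uIcc a.1 b.1 ×ˢ Set.uIcc a.2 b.2 := by
  ext m
  simp only [Rect, Set.mem_prod, Set.uIcc, Set.mem_Icc, Set.mem_ofPred_eq, and_assoc]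

lemma Rect_comm (a b : ℝ × ℝ) : Rect a b = Rect b a := by
  simp only [Rect_eq_uIcc_prod_uIcc, Set.uIcc_comm a.1, Set.uIcc_comm a.2]

lemma left_mem_Rect (a b : ℝ × ℝ) : a ∈ Rect a b := by
  rw [Rect_eq_uIcc_prod_uIcc]
  exact ⟨Set.left_mem_uIcc, Set.left_mem_uIcc⟩

lemma right_mem_Rect (a b : ℝ × ℝ) : b ∈ Rect a b := by
  rw [Rect_eq_uIcc_prod_uIcc]
  exact ⟨Set.right_mem_uIcc, Set.right_mem_uIcc⟩

lemma Rect_subset_Rect {a b c d : ℝ × ℝ} (hc : c ∈ Rect a b) (hd : d ∈ Rect a b) :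
    Rect c d ⊆ Rect a b := by
  simp only [Rect_eq_uIcc_prod_uIcc] at hc hd ⊢
  exact Set.prod_mono (Set.uIcc_subset_uIcc hc.1 hd.1) (Set.uIcc_subset_uIcc hc.2 hd.2)

lemma eq_of_mem_Rect_of_mem_Rect {a b c : ℝ × ℝ} (hc : c ∈ Rect a b) (hb : b ∈ Rect a c) :
    b = c := by
  rw [Rect_eq_uIcc_prod_uIcc] at hc hb
  exact Prod.ext (Set.eq_of_mem_uIcc_of_mem_uIcc' hb.1 hc.1)
    (Set.eq_of_mem_uIcc_of_mem_uIcc' hb.2 hc.2)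

lemma d1_add_d1_of_mem_Rect {a b c : ℝ × ℝ} (hc : c ∈ Rect a b) :
    d1 a c + d1 c b = d1 a b := by
  rw [Rect_eq_uIcc_prod_uIcc] at hc
  rw [d1, d1, d1, ← abs_sub_add_abs_sub_of_mem_uIcc hc.1,
    ← abs_sub_add_abs_sub_of_mem_uIcc hc.2]
  ring

lemma Rect_inter_ssubset_of_mem_Rect {T : Set (ℝ × ℝ)} {a b c : ℝ × ℝ} (hb : b ∈ T)
    (hc : c ∈ Rect a b) (hcb : c ≠ b) : Rect a c ∩ T ⊂ Rect a b ∩ T :=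
  Set.ssubset_iff_exists.mpr
    ⟨Set.inter_subset_inter_left T (Rect_subset_Rect (left_mem_Rect a b) hc),
      b, ⟨right_mem_Rect a b, hb⟩, fun hb' => hcb (eq_of_mem_Rect_of_mem_Rect hc hb'.1).symm⟩

lemma exists_mem_Rect_inter_ne_of_ne {T : Set (ℝ × ℝ)} {a b : ℝ × ℝ} (ha : a ∈ T)
    (hb : b ∈ T) (h : Rect a b ∩ T ≠ {a, b}) : ∃ c ∈ Rect a b ∩ T, c ≠ a ∧ c ≠ b := by
  have hab : {a, b} ⊂ Rect a b ∩ T := Set.ssubset_iff_subset_ne.mpr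
    ⟨Set.insert_subset ⟨left_mem_Rect a b, ha⟩
      (Set.singleton_subset_iff.mpr ⟨right_mem_Rect a b, hb⟩), h.symm⟩
  obtain ⟨c, hc, hcab⟩ := Set.exists_of_ssubset hab
  exact ⟨c, hc, by simpa [not_or] using hcab⟩

lemma pathLen_append_cons (P : List (ℝ × ℝ)) (c : ℝ × ℝ) (Q : List (ℝ × ℝ)) :
    pathLen (P ++ c :: Q) = pathLen (P ++ [c]) + pathLen (c :: Q) := by
  induction P with
  | nil => simp [pathLen]
  | cons x P ih =>
    cases P with
    | nil => simp [pathLen]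
    | cons y P => simp only [List.cons_append, pathLen] at ih ⊢; rw [ih]; ring

theorem DirManPath.trans {N : Set ((ℝ × ℝ) × (ℝ × ℝ))} {a b c : ℝ × ℝ}
    (hac : DirManPath N a c) (hcb : DirManPath N c b) (hd : d1 a c + d1 c b = d1 a b) :
    DirManPath N a b := by
  obtain ⟨P, ⟨hPa, hPc⟩, hPN, hPlen⟩ := hac
  obtain ⟨Q, ⟨hQc, hQb⟩, hQN, hQlen⟩ := hcb
  obtain ⟨P, rfl⟩ := List.getLast?_eq_some_iff.mp hPc
  obtain ⟨Q, rfl⟩ := List.head?_eq_some_iff.mp hQc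
  refine ⟨P ++ c :: Q, ⟨?_, ?_⟩, ?_, ?_⟩
  · cases P <;> simp_all
  · rwa [List.getLast?_append_of_ne_nil _ (List.cons_ne_nil c Q)]
  · show List.IsChain _ _
    simpa using hPN.append_overlap (l₃ := Q) hQN (List.cons_ne_nil c [])
  · rw [pathLen_append_cons, hPlen, hQlen, hd]

/-- The set of empty ordered pairs is a generating set: a directed network containing a
directed Manhattan path for every empty pair contains one for every ordered pair. -/
theorem stmt8 (T : Set (ℝ × ℝ)) (hfin : T.Finite)
    (N : Set ((ℝ × ℝ) × (ℝ × ℝ)))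
    (hgen : ∀ a ∈ T, ∀ b ∈ T, Rect a b ∩ T = {a, b} → DirManPath N a b) :
    ∀ a ∈ T, ∀ b ∈ T, DirManPath N a b := by
  intro a ha b hb
  induction hn : (Rect a b ∩ T).ncard using Nat.strong_induction_on generalizing a b with
  | _ n ih =>
    by_cases hempty : Rect a b ∩ T = {a, b}
    · exact hgen a ha b hb hempty
    obtain ⟨c, ⟨hcR, hcT⟩, hca, hcb⟩ := exists_mem_Rect_inter_ne_of_ne ha hb hempty
    have hlt_left : (Rect a c ∩ T).ncard < n :=
      hn ▸ Set.ncard_lt_ncard (Rect_inter_ssubset_of_mem_Rect hb hcR hcb) (hfin.inter_of_right _)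
    have hlt_right : (Rect c b ∩ T).ncard < n := by
      rw [Rect_comm] at hcR hn ⊢
      exact hn ▸
        Set.ncard_lt_ncard (Rect_inter_ssubset_of_mem_Rect ha hcR hca) (hfin.inter_of_right _)
    exact (ih _ hlt_left a ha c hcT rfl).trans (ih _ hlt_right c hcT b hb rfl)
      (d1_add_d1_of_mem_Rect hcR)
end
end
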